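/- arXiv:1806.08452 — 3 statements merged into one kernel-verified Lean document; each statement's English description precedes it below -/
import Mathlib

section
/- Let ℱ and 𝒢 be independent sub-σ-algebras of a probability space, let A₁ ∈ ℱ, A₂ ∈ 𝒢, let X₁ be a nonnegative bounded ℱ-measurable random variable and X₂ a nonnegative bounded 𝒢-measurable random variable, and let B₁, B₂ be events such that σ(B₁, ℱ) is independent of 𝒢 and σ(B₂, 𝒢) is independent of ℱ. Then E[(X₁X₂)² · 1_{A₁∩B₁∩A₂∩B₂}] ≥ (1/2) · E[X₁² · 1_{A₁} · 1_{{P(B₁|ℱ) ≥ 3/4}}] · E[X₂² · 1_{A₂} · 1_{{P(B₂|𝒢) ≥ 3/4}}]. -/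
open MeasureTheory

section Aux

variable {Ω : Type*} {mΩ : MeasurableSpace Ω} {μ : Measure Ω}

lemma aux_indepFun_of_measurable {m₁ m₂ : MeasurableSpace Ω}
    (h : ProbabilityTheory.Indep m₁ m₂ μ) {f g : Ω → ℝ}
    (hf : Measurable[m₁] f) (hg : Measurable[m₂] g) :
    ProbabilityTheory.IndepFun f g μ :=
  (ProbabilityTheory.IndepFun_iff_Indep f g μ).mpr <|
    ProbabilityTheory.indep_of_indep_of_le_right
      (ProbabilityTheory.indep_of_indep_of_le_left h hf.comap_le) hg.comap_le

lemma aux_ind_mul (U V : Set Ω) (f g : Ω → ℝ) (ω : Ω) :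
    (U ∩ V).indicator (fun ω => f ω * g ω) ω = U.indicator f ω * V.indicator g ω := by
  by_cases hU : ω ∈ U <;> by_cases hV : ω ∈ V <;>
    simp [Set.indicator_apply, hU, hV]

lemma aux_int_bdd [IsFiniteMeasure μ] {f : Ω → ℝ} {C : ℝ}
    (hf : Measurable f) (hb : ∀ ω, |f ω| ≤ C) : Integrable f μ :=
  ⟨hf.aestronglyMeasurable, HasFiniteIntegral.of_bounded (C := C) (ae_of_all _ (by simpa using hb))⟩

end Aux

/-- Weighted version (Lemma in Appendix D): with `ℱ ⊥ 𝒢`, `A₁ ∈ ℱ`, `A₂ ∈ 𝒢`,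
`X₁` nonnegative bounded `ℱ`-measurable, `X₂` nonnegative bounded `𝒢`-measurable,
`σ(B₁,ℱ) ⊥ 𝒢`, `σ(B₂,𝒢) ⊥ ℱ`:
`E[(X₁X₂)²·1_{A₁∩B₁∩A₂∩B₂}] ≥ (1/2)·E[X₁²1_{A₁}1_{P(B₁|ℱ)≥3/4}]·E[X₂²1_{A₂}1_{P(B₂|𝒢)≥3/4}]`. -/
theorem stmt3 {Ω : Type*} {mF mG : MeasurableSpace Ω} {mΩ : MeasurableSpace Ω} {μ : Measure Ω} [IsProbabilityMeasure μ]
    (hmF : mF ≤ mΩ) (hmG : mG ≤ mΩ)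
    (hFG : ProbabilityTheory.Indep mF mG μ)
    {A₁ A₂ B₁ B₂ : Set Ω}
    (hA₁ : MeasurableSet[mF] A₁) (hA₂ : MeasurableSet[mG] A₂)
    (hB₁ : MeasurableSet B₁) (hB₂ : MeasurableSet B₂)
    (hB₁G : ProbabilityTheory.Indep (mF ⊔ MeasurableSpace.generateFrom {B₁}) mG μ)
    (hB₂F : ProbabilityTheory.Indep (mG ⊔ MeasurableSpace.generateFrom {B₂}) mF μ)
    {X₁ X₂ : Ω → ℝ} (hX₁m : Measurable[mF] X₁) (hX₂m : Measurable[mG] X₂)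
    (hX₁0 : 0 ≤ X₁) (hX₂0 : 0 ≤ X₂)
    {C₁ C₂ : ℝ} (hX₁b : ∀ ω, X₁ ω ≤ C₁) (hX₂b : ∀ ω, X₂ ω ≤ C₂) :
    (1/2 : ℝ) *
        (∫ ω in A₁ ∩ {ω | (3:ℝ)/4 ≤ (μ[B₁.indicator (fun _ => (1:ℝ))|mF]) ω},
          (X₁ ω)^2 ∂μ) *
        (∫ ω in A₂ ∩ {ω | (3:ℝ)/4 ≤ (μ[B₂.indicator (fun _ => (1:ℝ))|mG]) ω},
          (X₂ ω)^2 ∂μ) ≤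
      ∫ ω in A₁ ∩ B₁ ∩ A₂ ∩ B₂, (X₁ ω * X₂ ω)^2 ∂μ := by
  classical
  letI : MeasurableSpace Ω := mΩ
  have hB₁amb : MeasurableSet[mΩ] B₁ := hB₁
  have hB₂amb : MeasurableSet[mΩ] B₂ := hB₂
  set f₁ : Ω → ℝ := fun ω => (X₁ ω)^2 with hf₁def
  set f₂ : Ω → ℝ := fun ω => (X₂ ω)^2 with hf₂def
  set g₁ : Ω → ℝ := μ[B₁.indicator (fun _ => (1:ℝ))|mF] with hg₁def
  set g₂ : Ω → ℝ := μ[B₂.indicator (fun _ => (1:ℝ))|mG] with hg₂def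
  set D₁ : Set Ω := A₁ ∩ {ω | (3:ℝ)/4 ≤ g₁ ω} with hD₁def
  set D₂ : Set Ω := A₂ ∩ {ω | (3:ℝ)/4 ≤ g₂ ω} with hD₂def
  -- measurability of D₁, D₂
  have hg₁m : Measurable[mF] g₁ := stronglyMeasurable_condExp.measurable
  have hg₂m : Measurable[mG] g₂ := stronglyMeasurable_condExp.measurable
  have hD₁F : MeasurableSet[mF] D₁ := hA₁.inter (measurableSet_le measurable_const hg₁m)
  have hD₂G : MeasurableSet[mG] D₂ := hA₂.inter (measurableSet_le measurable_const hg₂m)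
  have hD₁ : MeasurableSet[mΩ] D₁ := hmF _ hD₁F
  have hD₂ : MeasurableSet[mΩ] D₂ := hmG _ hD₂G
  -- basic measurability
  have hf₁F : Measurable[mF] f₁ := hX₁m.pow_const 2
  have hf₂G : Measurable[mG] f₂ := hX₂m.pow_const 2
  have hf₁ : Measurable[mΩ] f₁ := hf₁F.mono hmF le_rfl
  have hf₂ : Measurable[mΩ] f₂ := hf₂G.mono hmG le_rfl
  have hf₁0 : ∀ ω, 0 ≤ f₁ ω := fun ω => sq_nonneg _
  have hf₂0 : ∀ ω, 0 ≤ f₂ ω := fun ω => sq_nonneg _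
  have hf₁b : ∀ ω, |f₁ ω| ≤ C₁^2 := fun ω => by
    rw [abs_of_nonneg (hf₁0 ω)]
    exact pow_le_pow_left₀ (hX₁0 ω) (hX₁b ω) 2
  have hf₂b : ∀ ω, |f₂ ω| ≤ C₂^2 := fun ω => by
    rw [abs_of_nonneg (hf₂0 ω)]
    exact pow_le_pow_left₀ (hX₂0 ω) (hX₂b ω) 2
  -- indicator bounds
  have hindb : ∀ (S : Set Ω) (f : Ω → ℝ) (C : ℝ), (∀ ω, |f ω| ≤ C) →
      ∀ ω, |S.indicator f ω| ≤ C := by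
    intro S f C hC ω
    by_cases h : ω ∈ S
    · simpa [Set.indicator_apply, h] using hC ω
    · simp only [Set.indicator_apply, h, if_false, abs_zero]
      exact le_trans (abs_nonneg _) (hC ω)
  set F₁ : Ω → ℝ := D₁.indicator f₁ with hF₁def
  set F₂ : Ω → ℝ := D₂.indicator f₂ with hF₂def
  set F₁B : Ω → ℝ := (D₁ ∩ B₁ᶜ).indicator f₁ with hF₁Bdef
  set F₂B : Ω → ℝ := (D₂ ∩ B₂ᶜ).indicator f₂ with hF₂Bdef
  have hF₁m : Measurable[mΩ] F₁ := hf₁.indicator hD₁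
  have hF₂m : Measurable[mΩ] F₂ := hf₂.indicator hD₂
  have hF₁Bm : Measurable[mΩ] F₁B := hf₁.indicator (hD₁.inter hB₁amb.compl)
  have hF₂Bm : Measurable[mΩ] F₂B := hf₂.indicator (hD₂.inter hB₂amb.compl)
  have intF₁ : Integrable F₁ μ := aux_int_bdd hF₁m (hindb _ _ _ hf₁b)
  have intF₂ : Integrable F₂ μ := aux_int_bdd hF₂m (hindb _ _ _ hf₂b)
  have intF₁B : Integrable F₁B μ := aux_int_bdd hF₁Bm (hindb _ _ _ hf₁b)
  have intF₂B : Integrable F₂B μ := aux_int_bdd hF₂Bm (hindb _ _ _ hf₂b)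
  set P : ℝ := ∫ ω, F₁ ω ∂μ with hPdef
  set Q : ℝ := ∫ ω, F₂ ω ∂μ with hQdef
  have hP0 : 0 ≤ P := integral_nonneg (fun ω => Set.indicator_nonneg (fun ω _ => hf₁0 ω) ω)
  have hQ0 : 0 ≤ Q := integral_nonneg (fun ω => Set.indicator_nonneg (fun ω _ => hf₂0 ω) ω)
  -- goal LHS sets are D₁, D₂
  have hLHS₁ : (∫ ω in A₁ ∩ {ω | (3:ℝ)/4 ≤ g₁ ω}, f₁ ω ∂μ) = P := by
    rw [hPdef, hF₁def]
    exact (integral_indicator hD₁).symm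
  have hLHS₂ : (∫ ω in A₂ ∩ {ω | (3:ℝ)/4 ≤ g₂ ω}, f₂ ω ∂μ) = Q := by
    rw [hQdef, hF₂def]
    exact (integral_indicator hD₂).symm
  -- Step E for side 1 : ∫ F₁B ≤ P/4
  have key₁ : ∫ ω, F₁B ω ∂μ ≤ P/4 := by
    have hsplit : ∀ ω, F₁ ω = (D₁ ∩ B₁).indicator f₁ ω + F₁B ω := by
      intro ω
      by_cases h : ω ∈ D₁ <;> by_cases hb : ω ∈ B₁ <;>
        simp [hF₁def, hF₁Bdef, Set.indicator_apply, h, hb]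
    have h1Bint : Integrable (B₁.indicator (fun _ => (1:ℝ))) μ :=
      aux_int_bdd (measurable_const.indicator hB₁amb) (hindb _ _ 1 (fun ω => by simp))
    have hFmul : ∀ ω, (D₁ ∩ B₁).indicator f₁ ω = (F₁ * B₁.indicator (fun _ => (1:ℝ))) ω := by
      intro ω
      rw [Pi.mul_apply, hF₁def, ← aux_ind_mul]
      by_cases h : ω ∈ D₁ ∩ B₁ <;> simp [Set.indicator_apply, h]
    have hprodint : Integrable (F₁ * B₁.indicator (fun _ => (1:ℝ))) μ := by
      refine aux_int_bdd (hF₁m.mul (measurable_const.indicator hB₁amb)) (C := C₁^2) ?_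
      intro ω
      rw [Pi.mul_apply, abs_mul]
      calc |F₁ ω| * |B₁.indicator (fun _ => (1:ℝ)) ω| ≤ C₁^2 * 1 :=
            mul_le_mul (hindb _ _ _ hf₁b ω) (hindb _ _ 1 (fun ω => by simp) ω)
              (abs_nonneg _) (sq_nonneg C₁)
        _ = C₁^2 := mul_one _
    have hpull : μ[F₁ * B₁.indicator (fun _ => (1:ℝ))|mF]
        =ᵐ[μ] F₁ * g₁ := by
      rw [hg₁def]
      exact condExp_mul_of_stronglyMeasurable_left ((hf₁F.indicator hD₁F).stronglyMeasurable)
        hprodint h1Bint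
    have hcond : ∫ ω, (F₁ * B₁.indicator (fun _ => (1:ℝ))) ω ∂μ = ∫ ω, (F₁ * g₁) ω ∂μ := by
      rw [← integral_condExp (μ := μ) hmF (f := F₁ * B₁.indicator (fun _ => (1:ℝ)))]
      exact integral_congr_ae hpull
    have hFg_int : Integrable (F₁ * g₁) μ :=
      (integrable_condExp (f := F₁ * B₁.indicator (fun _ => (1:ℝ)))).congr hpull
    have hge : (3:ℝ)/4 * P ≤ ∫ ω, (F₁ * g₁) ω ∂μ := by
      rw [hPdef, ← integral_const_mul]
      refine integral_mono (intF₁.const_mul _) hFg_int ?_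
      intro ω
      rw [Pi.mul_apply]
      by_cases h : ω ∈ D₁
      · have hg : (3:ℝ)/4 ≤ g₁ ω := h.2
        have : 0 ≤ F₁ ω := Set.indicator_nonneg (fun ω _ => hf₁0 ω) ω
        calc (3:ℝ)/4 * F₁ ω ≤ g₁ ω * F₁ ω := mul_le_mul_of_nonneg_right hg this
          _ = F₁ ω * g₁ ω := mul_comm _ _
      · simp [hF₁def, Set.indicator_apply, h]
    have hPsum : P = ∫ ω, (F₁ * B₁.indicator (fun _ => (1:ℝ))) ω ∂μ + ∫ ω, F₁B ω ∂μ := by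
      have h1 : P = ∫ ω, ((F₁ * B₁.indicator (fun _ => (1:ℝ))) ω + F₁B ω) ∂μ := by
        rw [hPdef]
        refine integral_congr_ae (ae_of_all _ fun ω => ?_)
        show F₁ ω = (F₁ * B₁.indicator (fun _ => (1:ℝ))) ω + F₁B ω
        rw [← hFmul ω]; exact hsplit ω
      rw [h1]; exact integral_add hprodint intF₁B
    have := hcond ▸ hPsum
    linarith
  -- Step E for side 2 : ∫ F₂B ≤ Q/4
  have key₂ : ∫ ω, F₂B ω ∂μ ≤ Q/4 := by
    have hsplit : ∀ ω, F₂ ω = (D₂ ∩ B₂).indicator f₂ ω + F₂B ω := by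
      intro ω
      by_cases h : ω ∈ D₂ <;> by_cases hb : ω ∈ B₂ <;>
        simp [hF₂def, hF₂Bdef, Set.indicator_apply, h, hb]
    have h1Bint : Integrable (B₂.indicator (fun _ => (1:ℝ))) μ :=
      aux_int_bdd (measurable_const.indicator hB₂amb) (hindb _ _ 1 (fun ω => by simp))
    have hFmul : ∀ ω, (D₂ ∩ B₂).indicator f₂ ω = (F₂ * B₂.indicator (fun _ => (1:ℝ))) ω := by
      intro ω
      rw [Pi.mul_apply, hF₂def, ← aux_ind_mul]
      by_cases h : ω ∈ D₂ ∩ B₂ <;> simp [Set.indicator_apply, h]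
    have hprodint : Integrable (F₂ * B₂.indicator (fun _ => (1:ℝ))) μ := by
      refine aux_int_bdd (hF₂m.mul (measurable_const.indicator hB₂amb)) (C := C₂^2) ?_
      intro ω
      rw [Pi.mul_apply, abs_mul]
      calc |F₂ ω| * |B₂.indicator (fun _ => (1:ℝ)) ω| ≤ C₂^2 * 1 :=
            mul_le_mul (hindb _ _ _ hf₂b ω) (hindb _ _ 1 (fun ω => by simp) ω)
              (abs_nonneg _) (sq_nonneg C₂)
        _ = C₂^2 := mul_one _
    have hpull : μ[F₂ * B₂.indicator (fun _ => (1:ℝ))|mG]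
        =ᵐ[μ] F₂ * g₂ := by
      rw [hg₂def]
      exact condExp_mul_of_stronglyMeasurable_left ((hf₂G.indicator hD₂G).stronglyMeasurable)
        hprodint h1Bint
    have hcond : ∫ ω, (F₂ * B₂.indicator (fun _ => (1:ℝ))) ω ∂μ = ∫ ω, (F₂ * g₂) ω ∂μ := by
      rw [← integral_condExp (μ := μ) hmG (f := F₂ * B₂.indicator (fun _ => (1:ℝ)))]
      exact integral_congr_ae hpull
    have hFg_int : Integrable (F₂ * g₂) μ :=
      (integrable_condExp (f := F₂ * B₂.indicator (fun _ => (1:ℝ)))).congr hpull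
    have hge : (3:ℝ)/4 * Q ≤ ∫ ω, (F₂ * g₂) ω ∂μ := by
      rw [hQdef, ← integral_const_mul]
      refine integral_mono (intF₂.const_mul _) hFg_int ?_
      intro ω
      rw [Pi.mul_apply]
      by_cases h : ω ∈ D₂
      · have hg : (3:ℝ)/4 ≤ g₂ ω := h.2
        have : 0 ≤ F₂ ω := Set.indicator_nonneg (fun ω _ => hf₂0 ω) ω
        calc (3:ℝ)/4 * F₂ ω ≤ g₂ ω * F₂ ω := mul_le_mul_of_nonneg_right hg this
          _ = F₂ ω * g₂ ω := mul_comm _ _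
      · simp [hF₂def, Set.indicator_apply, h]
    have hQsum : Q = ∫ ω, (F₂ * B₂.indicator (fun _ => (1:ℝ))) ω ∂μ + ∫ ω, F₂B ω ∂μ := by
      have h1 : Q = ∫ ω, ((F₂ * B₂.indicator (fun _ => (1:ℝ))) ω + F₂B ω) ∂μ := by
        rw [hQdef]
        refine integral_congr_ae (ae_of_all _ fun ω => ?_)
        show F₂ ω = (F₂ * B₂.indicator (fun _ => (1:ℝ))) ω + F₂B ω
        rw [← hFmul ω]; exact hsplit ω
      rw [h1]; exact integral_add hprodint intF₂B
    have := hcond ▸ hQsum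
    linarith
  -- independence computations
  have hm₁sup : Measurable[mF ⊔ MeasurableSpace.generateFrom {B₁}] F₁B := by
    have hD₁' : MeasurableSet[mF ⊔ MeasurableSpace.generateFrom {B₁}] D₁ :=
      (le_sup_left : mF ≤ _) _ hD₁F
    have hB₁' : MeasurableSet[mF ⊔ MeasurableSpace.generateFrom {B₁}] B₁ :=
      (le_sup_right : MeasurableSpace.generateFrom {B₁} ≤ _) _
        (MeasurableSpace.measurableSet_generateFrom rfl)
    exact (hf₁F.mono le_sup_left le_rfl).indicator (hD₁'.inter hB₁'.compl)
  have hm₂sup : Measurable[mG ⊔ MeasurableSpace.generateFrom {B₂}] F₂B := by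
    have hD₂' : MeasurableSet[mG ⊔ MeasurableSpace.generateFrom {B₂}] D₂ :=
      (le_sup_left : mG ≤ _) _ hD₂G
    have hB₂' : MeasurableSet[mG ⊔ MeasurableSpace.generateFrom {B₂}] B₂ :=
      (le_sup_right : MeasurableSpace.generateFrom {B₂} ≤ _) _
        (MeasurableSpace.measurableSet_generateFrom rfl)
    exact (hf₂G.mono le_sup_left le_rfl).indicator (hD₂'.inter hB₂'.compl)
  have hindep₀ : ProbabilityTheory.IndepFun F₁ F₂ μ :=
    aux_indepFun_of_measurable hFG (hf₁F.indicator hD₁F) (hf₂G.indicator hD₂G)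
  have hindep₁ : ProbabilityTheory.IndepFun F₁B F₂ μ :=
    aux_indepFun_of_measurable hB₁G hm₁sup (hf₂G.indicator hD₂G)
  have hindep₂ : ProbabilityTheory.IndepFun F₁ F₂B μ :=
    (aux_indepFun_of_measurable hB₂F hm₂sup (hf₁F.indicator hD₁F)).symm
  have hmul₀ : ∫ ω, F₁ ω * F₂ ω ∂μ = P * Q := by
    have := ProbabilityTheory.IndepFun.integral_mul_eq_mul_integral hindep₀ intF₁.1 intF₂.1
    simpa [Pi.mul_apply] using this
  have hmul₁ : ∫ ω, F₁B ω * F₂ ω ∂μ = (∫ ω, F₁B ω ∂μ) * Q := by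
    have := ProbabilityTheory.IndepFun.integral_mul_eq_mul_integral hindep₁ intF₁B.1 intF₂.1
    simpa [Pi.mul_apply] using this
  have hmul₂ : ∫ ω, F₁ ω * F₂B ω ∂μ = P * (∫ ω, F₂B ω ∂μ) := by
    have := ProbabilityTheory.IndepFun.integral_mul_eq_mul_integral hindep₂ intF₁.1 intF₂B.1
    simpa [Pi.mul_apply] using this
  -- the main decomposition inequality
  set h : Ω → ℝ := fun ω => f₁ ω * f₂ ω with hhdef
  have hh0 : ∀ ω, 0 ≤ h ω := fun ω => mul_nonneg (hf₁0 ω) (hf₂0 ω)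
  have hhm : Measurable[mΩ] h := hf₁.mul hf₂
  have hhb : ∀ ω, |h ω| ≤ C₁^2 * C₂^2 := fun ω => by
    rw [abs_mul]
    exact mul_le_mul (hf₁b ω) (hf₂b ω) (abs_nonneg _) (sq_nonneg C₁)
  have hint_h : Integrable h μ := aux_int_bdd hhm hhb
  set S₀ : Set Ω := (D₁ ∩ B₁) ∩ (D₂ ∩ B₂) with hS₀def
  have hS₀ : MeasurableSet[mΩ] S₀ := (hD₁.inter hB₁amb).inter (hD₂.inter hB₂amb)
  have hptwise : ∀ ω, (D₁ ∩ D₂).indicator h ω ≤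
      S₀.indicator h ω + ((D₁ ∩ B₁ᶜ) ∩ D₂).indicator h ω + (D₁ ∩ (D₂ ∩ B₂ᶜ)).indicator h ω := by
    intro ω
    have h0 := hh0 ω
    by_cases h1 : ω ∈ D₁ <;> by_cases h2 : ω ∈ D₂ <;>
      by_cases hb1 : ω ∈ B₁ <;> by_cases hb2 : ω ∈ B₂ <;>
      simp [hS₀def, Set.indicator_apply, h1, h2, hb1, hb2] <;> linarith
  have hintS₀ : Integrable (S₀.indicator h) μ :=
    aux_int_bdd (hhm.indicator hS₀) (hindb _ _ _ hhb)
  have hintS₁ : Integrable (((D₁ ∩ B₁ᶜ) ∩ D₂).indicator h) μ :=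
    aux_int_bdd (hhm.indicator (((hD₁.inter hB₁amb.compl)).inter hD₂)) (hindb _ _ _ hhb)
  have hintS₂ : Integrable ((D₁ ∩ (D₂ ∩ B₂ᶜ)).indicator h) μ :=
    aux_int_bdd (hhm.indicator (hD₁.inter (hD₂.inter hB₂amb.compl))) (hindb _ _ _ hhb)
  have hintD : Integrable ((D₁ ∩ D₂).indicator h) μ :=
    aux_int_bdd (hhm.indicator (hD₁.inter hD₂)) (hindb _ _ _ hhb)
  have hdecomp : ∫ ω, (D₁ ∩ D₂).indicator h ω ∂μ ≤
      ∫ ω, S₀.indicator h ω ∂μ + ∫ ω, ((D₁ ∩ B₁ᶜ) ∩ D₂).indicator h ω ∂μ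
        + ∫ ω, (D₁ ∩ (D₂ ∩ B₂ᶜ)).indicator h ω ∂μ := by
    calc ∫ ω, (D₁ ∩ D₂).indicator h ω ∂μ
        ≤ ∫ ω, (S₀.indicator h ω + ((D₁ ∩ B₁ᶜ) ∩ D₂).indicator h ω
            + (D₁ ∩ (D₂ ∩ B₂ᶜ)).indicator h ω) ∂μ :=
          integral_mono hintD (by exact (hintS₀.add hintS₁).add hintS₂) hptwise
      _ = (∫ ω, (S₀.indicator h ω + ((D₁ ∩ B₁ᶜ) ∩ D₂).indicator h ω) ∂μ)
            + ∫ ω, (D₁ ∩ (D₂ ∩ B₂ᶜ)).indicator h ω ∂μ := by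
          exact integral_add (hintS₀.add hintS₁) hintS₂
      _ = ∫ ω, S₀.indicator h ω ∂μ + ∫ ω, ((D₁ ∩ B₁ᶜ) ∩ D₂).indicator h ω ∂μ
            + ∫ ω, (D₁ ∩ (D₂ ∩ B₂ᶜ)).indicator h ω ∂μ := by
          have e : (∫ ω, (S₀.indicator h ω + ((D₁ ∩ B₁ᶜ) ∩ D₂).indicator h ω) ∂μ)
              = ∫ ω, S₀.indicator h ω ∂μ + ∫ ω, ((D₁ ∩ B₁ᶜ) ∩ D₂).indicator h ω ∂μ := by
            exact integral_add hintS₀ hintS₁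
          rw [e]
  -- identify the three integrals
  have hI_D : ∫ ω, (D₁ ∩ D₂).indicator h ω ∂μ = P * Q := by
    rw [← hmul₀]
    refine integral_congr_ae (ae_of_all _ fun ω => ?_)
    exact aux_ind_mul D₁ D₂ f₁ f₂ ω
  have hI_1 : ∫ ω, ((D₁ ∩ B₁ᶜ) ∩ D₂).indicator h ω ∂μ = (∫ ω, F₁B ω ∂μ) * Q := by
    rw [← hmul₁]
    refine integral_congr_ae (ae_of_all _ fun ω => ?_)
    exact aux_ind_mul (D₁ ∩ B₁ᶜ) D₂ f₁ f₂ ω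
  have hI_2 : ∫ ω, (D₁ ∩ (D₂ ∩ B₂ᶜ)).indicator h ω ∂μ = P * (∫ ω, F₂B ω ∂μ) := by
    rw [← hmul₂]
    refine integral_congr_ae (ae_of_all _ fun ω => ?_)
    exact aux_ind_mul D₁ (D₂ ∩ B₂ᶜ) f₁ f₂ ω
  -- step A: S₀ ⊆ goal set
  have hfinal : ∫ ω, S₀.indicator h ω ∂μ ≤ ∫ ω in A₁ ∩ B₁ ∩ A₂ ∩ B₂, h ω ∂μ := by
    calc ∫ ω, S₀.indicator h ω ∂μ = ∫ ω in S₀, h ω ∂μ := integral_indicator hS₀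
      _ ≤ ∫ ω in A₁ ∩ B₁ ∩ A₂ ∩ B₂, h ω ∂μ := ?_
    refine setIntegral_mono_set hint_h.integrableOn (ae_of_all _ fun ω => hh0 ω)
      (ae_of_all _ ?_)
    intro ω hω
    obtain ⟨⟨hωD₁, hωB₁⟩, hωD₂, hωB₂⟩ := hω
    exact ⟨⟨⟨hωD₁.1, hωB₁⟩, hωD₂.1⟩, hωB₂⟩
  -- nonneg of error terms
  have hFB₁0 : 0 ≤ ∫ ω, F₁B ω ∂μ :=
    integral_nonneg fun ω => Set.indicator_nonneg (fun ω _ => hf₁0 ω) ω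
  have hFB₂0 : 0 ≤ ∫ ω, F₂B ω ∂μ :=
    integral_nonneg fun ω => Set.indicator_nonneg (fun ω _ => hf₂0 ω) ω
  -- put everything together
  have hgoal_eq : ∫ ω in A₁ ∩ B₁ ∩ A₂ ∩ B₂, (X₁ ω * X₂ ω)^2 ∂μ
      = ∫ ω in A₁ ∩ B₁ ∩ A₂ ∩ B₂, h ω ∂μ := by
    refine setIntegral_congr_fun ?_ fun ω _ => ?_
    · exact ((hmF _ hA₁).inter hB₁amb |>.inter (hmG _ hA₂) |>.inter hB₂amb)
    simp [hhdef, hf₁def, hf₂def, mul_pow]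
  rw [hLHS₁, hLHS₂, hgoal_eq]
  have e1 : (∫ ω, F₁B ω ∂μ) * Q ≤ P/4 * Q := mul_le_mul_of_nonneg_right key₁ hQ0
  have e2 : P * (∫ ω, F₂B ω ∂μ) ≤ P * (Q/4) := mul_le_mul_of_nonneg_left key₂ hP0
  have := hdecomp
  rw [hI_D, hI_1, hI_2] at this
  nlinarith [hfinal]
end

section
/- Let n ∈ ℕ, p ∈ (0,1), and let P_p^n = (pδ₁ + (1−p)δ_{−1})^{⊗n} be product measure on {−1,1}ⁿ. Let A ⊆ {−1,1}ⁿ be any event and for i ∈ {1,…,n} let Piv_i(A) be the event that flipping the i-th coordinate changes the indicator of A. Then the map p ↦ P_p^n(A) is differentiable and |d/dp P_p^n(A)| ≤ Σ_{i=1}^n P_p^n(Piv_i(A)). -/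
/-!
Russo–Margulis. Differentiating the product weight of a configuration coordinate by coordinate,
the `i`-th contribution to `d/dq P_q(A)` is `Σ_{ω ∈ A} ±P(ω restricted to the other coordinates)`,
with sign `+` if `ω i` is true. Flipping coordinate `i` pairs off the non-pivotal configurations
of `A` with opposite signs, so only `A ∩ Piv_i(A)` survives; and since flipping is a bijection from
`A ∩ Piv_i(A)` onto `Piv_i(A) \ A` and `q + (1 - q) = 1`, the sum of these marginal weights over
`A ∩ Piv_i(A)` is exactly `P_q(Piv_i(A))`.
-/

open Finset

namespace RussoMargulis

variable {ι : Type*} [DecidableEq ι]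

def flipCoord (i : ι) (ω : ι → Bool) : ι → Bool := Function.update ω i (!ω i)

@[simp] lemma flipCoord_apply_self (i : ι) (ω : ι → Bool) : flipCoord i ω i = !ω i := by
  simp [flipCoord]

lemma flipCoord_apply_of_ne {i j : ι} (h : j ≠ i) (ω : ι → Bool) : flipCoord i ω j = ω j :=
  Function.update_of_ne h _ _

@[simp] lemma flipCoord_flipCoord (i : ι) (ω : ι → Bool) : flipCoord i (flipCoord i ω) = ω := by
  simp [flipCoord, Function.update_idem]

lemma flipCoord_ne (i : ι) (ω : ι → Bool) : flipCoord i ω ≠ ω := fun h => by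
  simpa using congrFun h i

variable [Fintype ι]

def pivotalSet (A : Finset (ι → Bool)) (i : ι) : Finset (ι → Bool) :=
  univ.filter fun ω => ¬(ω ∈ A ↔ flipCoord i ω ∈ A)

lemma mem_pivotalSet {A : Finset (ι → Bool)} {i : ι} {ω : ι → Bool} :
    ω ∈ pivotalSet A i ↔ ¬(ω ∈ A ↔ flipCoord i ω ∈ A) := by
  simp [pivotalSet]

lemma flipCoord_mem_pivotalSet_iff {A : Finset (ι → Bool)} {i : ι} {ω : ι → Bool} :
    flipCoord i ω ∈ pivotalSet A i ↔ ω ∈ pivotalSet A i := by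
  rw [mem_pivotalSet, mem_pivotalSet, flipCoord_flipCoord]
  tauto

/-- The probability of the configuration `ω` under the product measure `P_q`. -/
def weight (q : ℝ) (ω : ι → Bool) : ℝ := ∏ j, if ω j then q else 1 - q

def weightExcept (i : ι) (q : ℝ) (ω : ι → Bool) : ℝ := ∏ j ∈ univ.erase i, if ω j then q else 1 - q

lemma weightExcept_nonneg {q : ℝ} (hq₀ : 0 ≤ q) (hq₁ : q ≤ 1) (i : ι) (ω : ι → Bool) :
    0 ≤ weightExcept i q ω :=
  prod_nonneg fun j _ => by split <;> linarith

lemma weightExcept_flipCoord (i : ι) (q : ℝ) (ω : ι → Bool) :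
    weightExcept i q (flipCoord i ω) = weightExcept i q ω :=
  prod_congr rfl fun _ hj => by rw [flipCoord_apply_of_ne (ne_of_mem_erase hj)]

lemma weight_eq_mul_weightExcept (i : ι) (q : ℝ) (ω : ι → Bool) :
    weight q ω = (if ω i then q else 1 - q) * weightExcept i q ω :=
  (mul_prod_erase univ _ (mem_univ i)).symm

lemma weight_add_weight_flipCoord (i : ι) (q : ℝ) (ω : ι → Bool) :
    weight q ω + weight q (flipCoord i ω) = weightExcept i q ω := by
  rw [weight_eq_mul_weightExcept i, weight_eq_mul_weightExcept i, weightExcept_flipCoord,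
    flipCoord_apply_self]
  cases ω i <;> simp <;> ring

lemma hasDerivAt_weight (ω : ι → Bool) (p : ℝ) :
    HasDerivAt (fun q => weight q ω)
      (∑ i, (if ω i then 1 else -1) * weightExcept i p ω) p := by
  have hfactor : ∀ i ∈ (univ : Finset ι), HasDerivAt (fun q : ℝ => if ω i then q else 1 - q)
      (if ω i then 1 else -1) p := fun i _ => by
    cases ω i
    · simpa using (hasDerivAt_id p).const_sub 1
    · simpa using hasDerivAt_id' p
  simpa [weight, weightExcept, mul_comm] using HasDerivAt.fun_finsetProd hfactor

def coordDeriv (A : Finset (ι → Bool)) (i : ι) (q : ℝ) : ℝ :=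
  ∑ ω ∈ A, (if ω i then 1 else -1) * weightExcept i q ω

lemma coordDeriv_eq_sum_pivotal (A : Finset (ι → Bool)) (i : ι) (q : ℝ) :
    coordDeriv A i q =
      ∑ ω ∈ (pivotalSet A i).filter (· ∈ A), (if ω i then 1 else -1) * weightExcept i q ω := by
  have hcancel : ∑ ω ∈ A.filter (· ∉ pivotalSet A i),
      (if ω i then (1 : ℝ) else -1) * weightExcept i q ω = 0 := by
    refine sum_involution (fun ω _ => flipCoord i ω) (fun ω _ => ?_)
      (fun ω _ _ => flipCoord_ne i ω) (fun ω hω => ?_) (fun ω _ => flipCoord_flipCoord i ω)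
    · rw [weightExcept_flipCoord, flipCoord_apply_self]
      cases ω i <;> simp
    · simp only [mem_filter, flipCoord_mem_pivotalSet_iff] at hω ⊢
      exact ⟨(not_not.mp (mem_pivotalSet.not.mp hω.2)).mp hω.1, hω.2⟩
  rw [coordDeriv, ← sum_filter_add_sum_filter_not A (· ∈ pivotalSet A i), hcancel, add_zero]
  congr 1
  ext ω
  simp [and_comm]

lemma sum_weight_pivotalSet (A : Finset (ι → Bool)) (i : ι) (q : ℝ) :
    ∑ ω ∈ pivotalSet A i, weight q ω = ∑ ω ∈ (pivotalSet A i).filter (· ∈ A), weightExcept i q ω := by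
  have hflip : ∑ ω ∈ (pivotalSet A i).filter (· ∉ A), weight q ω =
      ∑ ω ∈ (pivotalSet A i).filter (· ∈ A), weight q (flipCoord i ω) := by
    refine sum_nbij' (flipCoord i) (flipCoord i) (fun ω hω => ?_) (fun ω hω => ?_)
      (fun ω _ => flipCoord_flipCoord i ω) (fun ω _ => flipCoord_flipCoord i ω) (fun ω _ => ?_)
    · simp only [mem_filter, flipCoord_mem_pivotalSet_iff] at hω ⊢
      exact ⟨hω.1, by have := mem_pivotalSet.mp hω.1; tauto⟩
    · simp only [mem_filter, flipCoord_mem_pivotalSet_iff] at hω ⊢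
      exact ⟨hω.1, by have := mem_pivotalSet.mp hω.1; tauto⟩
    · rw [flipCoord_flipCoord]
  rw [← sum_filter_add_sum_filter_not _ (· ∈ A), hflip, ← sum_add_distrib]
  exact sum_congr rfl fun ω _ => weight_add_weight_flipCoord i q ω

lemma abs_coordDeriv_le {q : ℝ} (hq₀ : 0 ≤ q) (hq₁ : q ≤ 1) (A : Finset (ι → Bool)) (i : ι) :
    |coordDeriv A i q| ≤ ∑ ω ∈ pivotalSet A i, weight q ω := by
  rw [coordDeriv_eq_sum_pivotal, sum_weight_pivotalSet]
  refine (abs_sum_le_sum_abs _ _).trans_eq (sum_congr rfl fun ω _ => ?_)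
  rw [abs_mul, abs_of_nonneg (weightExcept_nonneg hq₀ hq₁ i ω)]
  cases ω i <;> simp

end RussoMargulis

open RussoMargulis in
/-- For any event `A ⊆ {−1,1}ⁿ` (configurations encoded as `Fin n → Bool`), the map
`p ↦ P_p^n(A)` is differentiable with `|d/dp P_p^n(A)| ≤ Σ_i P_p^n(Piv_i(A))`, where
`Piv_i(A)` is the event that flipping coordinate `i` changes membership in `A`. -/
theorem stmt5 (n : ℕ) (p : ℝ) (hp : p ∈ Set.Ioo (0:ℝ) 1)
    (A : Finset (Fin n → Bool)) :
    ∃ d : ℝ,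
      HasDerivAt (fun q : ℝ => ∑ ω ∈ A, ∏ i, (if ω i then q else 1 - q)) d p ∧
      |d| ≤ ∑ i : Fin n,
          ∑ ω ∈ Finset.univ.filter
              (fun ω : Fin n → Bool =>
                ¬((ω ∈ A) ↔ (Function.update ω i (!ω i) ∈ A))),
            ∏ j, (if ω j then p else 1 - p) := by
  refine ⟨∑ i, coordDeriv A i p, ?_, ?_⟩
  · have h := HasDerivAt.fun_sum fun ω (_ : ω ∈ A) => hasDerivAt_weight ω p
    rwa [sum_comm] at h
  · exact (abs_sum_le_sum_abs _ _).trans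
      (sum_le_sum fun i _ => abs_coordDeriv_le hp.1.le hp.2.le A i)
end

section
/- Let n ∈ ℕ, p ∈ (0,1), and let A ⊆ {−1,1}ⁿ be an increasing event (closed under raising coordinates from −1 to 1). Then d/dp P_p^n(A) = Σ_{i=1}^n P_p^n(Piv_i(A)) (Russo's formula). -/
/-!
By the product rule, the derivative of the weight `∏ j, (q or 1 - q)` of a configuration is a sum
over coordinates `i` of `±` the weight of the coordinates other than `i`. For fixed `i`, group the
configurations into pairs `{ω, σ}` differing exactly at `i`, with `ω i = false`, `σ i = true`.
As `A` is increasing, `ω ∈ A` forces `σ ∈ A`, so the pair contributes to `d/dp` only when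
`ω ∉ A ∋ σ`, i.e. when both are pivotal at `i`; then its contribution is the weight of the other
coordinates, which is also `P(ω) + P(σ) = ((1 - p) + p) · (that weight)`.
-/

open Finset Function

section
variable {ι : Type*} [Fintype ι] [DecidableEq ι]

theorem sum_eq_sum_filter_eq_false_add_update {M : Type*} [AddCommMonoid M] (i : ι)
    (f : (ι → Bool) → M) :
    ∑ ω, f ω = ∑ ω with ω i = false, (f ω + f (update ω i true)) := by
  rw [sum_add_distrib, ← sum_filter_add_sum_filter_not univ (fun ω => ω i = false)]
  congr 1
  refine sum_nbij' (update · i false) (update · i true) ?_ ?_ ?_ ?_ ?_ <;>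
    intro ω hω <;> simp_all [update_idem]
  rw [← hω, update_eq_self]

def bernoulliWeight (p : ℝ) (ω : ι → Bool) : ℝ := ∏ j, if ω j then p else 1 - p

def bernoulliWeightExcept (p : ℝ) (i : ι) (ω : ι → Bool) : ℝ :=
  ∏ j ∈ univ.erase i, if ω j then p else 1 - p

theorem bernoulliWeightExcept_update (p : ℝ) (i : ι) (ω : ι → Bool) (b : Bool) :
    bernoulliWeightExcept p i (update ω i b) = bernoulliWeightExcept p i ω :=
  prod_congr rfl fun _ hj => by rw [update_of_ne (ne_of_mem_erase hj)]

theorem bernoulliWeight_eq_mul_except (p : ℝ) (i : ι) (ω : ι → Bool) :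
    bernoulliWeight p ω = (if ω i then p else 1 - p) * bernoulliWeightExcept p i ω :=
  (mul_prod_erase _ _ (mem_univ i)).symm

theorem hasDerivAt_bernoulliWeight (ω : ι → Bool) (p : ℝ) :
    HasDerivAt (bernoulliWeight · ω)
      (∑ i, bernoulliWeightExcept p i ω * if ω i then 1 else -1) p := by
  have hcoord (i : ι) : HasDerivAt (fun q : ℝ => if ω i then q else 1 - q)
      (if ω i then 1 else -1) p := by
    cases ω i
    · simpa using (hasDerivAt_id p).const_sub 1
    · exact hasDerivAt_id p
  have hprod := HasDerivAt.fun_finsetProd fun i (_ : i ∈ univ) => hcoord i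
  simp only [smul_eq_mul] at hprod
  exact hprod

theorem sum_mem_bernoulliWeightExcept_mul_sign {A : Finset (ι → Bool)}
    (hA : IsUpperSet (A : Set (ι → Bool))) (p : ℝ) (i : ι) :
    ∑ ω ∈ A, bernoulliWeightExcept p i ω * (if ω i then 1 else -1)
      = ∑ ω with ¬(ω ∈ A ↔ update ω i (!ω i) ∈ A), bernoulliWeight p ω := by
  rw [← sum_ite_mem_eq A, sum_filter, sum_eq_sum_filter_eq_false_add_update i,
    sum_eq_sum_filter_eq_false_add_update i]
  refine sum_congr rfl fun ω hω => ?_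
  obtain ⟨-, hωi⟩ := mem_filter.1 hω
  set σ := update ω i true
  have hσi : σ i = true := update_self ..
  have hflipω : update ω i (!ω i) = σ := by rw [hωi]; rfl
  have hflipσ : update σ i (!σ i) = ω := by
    rw [hσi, Bool.not_true, update_idem, ← hωi, update_eq_self]
  have hσA : ω ∈ A → σ ∈ A := hA (le_update_iff.2 ⟨Bool.le_true _, fun _ _ => le_rfl⟩)
  rw [hflipω, hflipσ, hσi, hωi, bernoulliWeight_eq_mul_except p i ω,
    bernoulliWeight_eq_mul_except p i σ, bernoulliWeightExcept_update, hσi, hωi]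
  by_cases hωA : ω ∈ A
  · simp [hωA, hσA hωA]
  by_cases hσA' : σ ∈ A
  · simp only [hωA, hσA', iff_false, iff_true, not_true, not_false_eq_true, if_true, if_false,
      Bool.false_eq_true]
    ring
  · simp [hωA, hσA']

end

theorem stmt6_general (n : ℕ) (p : ℝ)
    (A : Finset (Fin n → Bool))
    (hA : ∀ ω ∈ A, ∀ ω' : Fin n → Bool, (∀ i, ω i ≤ ω' i) → ω' ∈ A) :
    HasDerivAt (fun q : ℝ => ∑ ω ∈ A, ∏ i, (if ω i then q else 1 - q))
      (∑ i : Fin n,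
        ∑ ω ∈ Finset.univ.filter
            (fun ω : Fin n → Bool =>
              ¬((ω ∈ A) ↔ (Function.update ω i (!ω i) ∈ A))),
          ∏ j, (if ω j then p else 1 - p)) p := by
  have hUpper : IsUpperSet (A : Set (Fin n → Bool)) := fun ω ω' hle hω => hA ω hω ω' hle
  have hsum := HasDerivAt.fun_sum fun ω (_ : ω ∈ A) => hasDerivAt_bernoulliWeight ω p
  rw [sum_comm] at hsum
  simp only [sum_mem_bernoulliWeightExcept_mul_sign hUpper] at hsum
  exact hsum

/-- Russo's formula: for an increasing event `A ⊆ {−1,1}ⁿ` (configurations encoded as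
`Fin n → Bool`, increasing = closed under raising coordinates),
`d/dp P_p^n(A) = Σ_i P_p^n(Piv_i(A))`. -/
theorem stmt6 (n : ℕ) (p : ℝ) (hp : p ∈ Set.Ioo (0:ℝ) 1)
    (A : Finset (Fin n → Bool))
    (hA : ∀ ω ∈ A, ∀ ω' : Fin n → Bool, (∀ i, ω i ≤ ω' i) → ω' ∈ A) :
    HasDerivAt (fun q : ℝ => ∑ ω ∈ A, ∏ i, (if ω i then q else 1 - q))
      (∑ i : Fin n,
        ∑ ω ∈ Finset.univ.filter
            (fun ω : Fin n → Bool =>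
              ¬((ω ∈ A) ↔ (Function.update ω i (!ω i) ∈ A))),
          ∏ j, (if ω j then p else 1 - p)) p :=
  stmt6_general n p A hA
end
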